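/- Let {f_j : j ∈ J} be a Parseval frame for an N-dimensional Hilbert space, let E ⊆ J, let S = span{f_j : j ∉ E}, and let P be the orthogonal projection onto S^⊥. Then dim S^⊥ = ∑_{j∈E} ‖P f_j‖². In particular, if ‖f_j‖² ≤ 1 − δ for all j, then dim S^⊥ ≤ |E|(1 − δ). -/

import Mathlib

open scoped InnerProductSpace

/-!
Testing a Parseval frame against an orthonormal basis `(e i)` of a subspace `K` gives
`dim K = ∑ i ‖e i‖² = ∑ i ∑ j |⟪e i, f j⟫|² = ∑ j ‖P_K f j‖²`. For `K = Sᗮ` the terms with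
`j ∉ E` vanish because those `f j` lie in `S`, and `‖P f j‖ ≤ ‖f j‖` gives the bound.
-/

section

variable {𝕜 E ι : Type*} [RCLike 𝕜] [NormedAddCommGroup E] [InnerProductSpace 𝕜 E] [Fintype ι]

variable (𝕜) in
def IsParsevalFrame (f : ι → E) : Prop :=
  ∀ x : E, ∑ j, ‖⟪x, f j⟫_𝕜‖ ^ 2 = ‖x‖ ^ 2

theorem IsParsevalFrame.sum_norm_sq_orthogonalProjectionOnto {f : ι → E}
    (hf : IsParsevalFrame 𝕜 f) (K : Submodule 𝕜 E) [FiniteDimensional 𝕜 K] :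
    ∑ j, ‖(K.orthogonalProjectionOnto (f j) : E)‖ ^ 2 = Module.finrank 𝕜 K := by
  set b := stdOrthonormalBasis 𝕜 K
  have norm_sq_proj (j : ι) :
      ‖(K.orthogonalProjectionOnto (f j) : E)‖ ^ 2 = ∑ i, ‖⟪(b i : E), f j⟫_𝕜‖ ^ 2 := by
    rw [Submodule.norm_coe, ← b.sum_sq_norm_inner_right]
    simp only [Submodule.inner_orthogonalProjectionOnto_eq_of_mem_left]
  calc ∑ j, ‖(K.orthogonalProjectionOnto (f j) : E)‖ ^ 2
      = ∑ i, ∑ j, ‖⟪(b i : E), f j⟫_𝕜‖ ^ 2 := by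
        simp only [norm_sq_proj]
        exact Finset.sum_comm
    _ = ∑ _i : Fin (Module.finrank 𝕜 K), (1 : ℝ) := by
        simp only [hf _, Submodule.norm_coe, b.orthonormal.1, one_pow]
    _ = Module.finrank 𝕜 K := by simp

theorem sum_norm_sq_orthogonalProjectionOnto_orthogonal_eq_sum_finset {S : Submodule 𝕜 E}
    [Sᗮ.HasOrthogonalProjection] {f : ι → E} {s : Finset ι} (hfS : ∀ j ∉ s, f j ∈ S) :
    ∑ j, ‖(Sᗮ.orthogonalProjectionOnto (f j) : E)‖ ^ 2 =
      ∑ j ∈ s, ‖(Sᗮ.orthogonalProjectionOnto (f j) : E)‖ ^ 2 := by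
  refine (Finset.sum_subset s.subset_univ fun j _ hj => ?_).symm
  simp [Submodule.orthogonalProjectionOnto_orthogonal_apply_eq_zero (hfS j hj)]

end

/-- For a Parseval frame `{f j : j ∈ J}` of a finite-dimensional Hilbert
space, `E ⊆ J`, `S = span{f j : j ∉ E}` and `P` the orthogonal projection onto `Sᗮ`,
we have `dim Sᗮ = ∑_{j ∈ E} ‖P f j‖²`; in particular if `‖f j‖² ≤ 1 - δ` for all `j`
then `dim Sᗮ ≤ |E| (1 - δ)`. -/
theorem finrank_orthogonal_complement_eq_sum
    {H : Type*} [NormedAddCommGroup H] [InnerProductSpace ℂ H] [FiniteDimensional ℂ H]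
    {J : Type*} [Fintype J] (f : J → H)
    (hParseval : ∀ x : H, ∑ j : J, ‖⟪x, f j⟫_ℂ‖ ^ 2 = ‖x‖ ^ 2)
    (E : Finset J) (S : Submodule ℂ H)
    (hS : S = Submodule.span ℂ (f '' (↑E : Set J)ᶜ)) (δ : ℝ) :
    (Module.finrank ℂ Sᗮ : ℝ) = ∑ j ∈ E, ‖((Sᗮ).orthogonalProjectionOnto (f j) : H)‖ ^ 2 ∧
    ((∀ j : J, ‖f j‖ ^ 2 ≤ 1 - δ) →
      (Module.finrank ℂ Sᗮ : ℝ) ≤ (E.card : ℝ) * (1 - δ)) := by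
  have hfS : ∀ j ∉ E, f j ∈ S := fun j hj =>
    hS ▸ Submodule.subset_span ⟨j, by simpa using hj, rfl⟩
  have hdim : (Module.finrank ℂ Sᗮ : ℝ) =
      ∑ j ∈ E, ‖((Sᗮ).orthogonalProjectionOnto (f j) : H)‖ ^ 2 := by
    rw [← sum_norm_sq_orthogonalProjectionOnto_orthogonal_eq_sum_finset hfS,
      IsParsevalFrame.sum_norm_sq_orthogonalProjectionOnto hParseval]
  refine ⟨hdim, fun hδ => ?_⟩
  calc (Module.finrank ℂ Sᗮ : ℝ)
      = ∑ j ∈ E, ‖((Sᗮ).orthogonalProjectionOnto (f j) : H)‖ ^ 2 := hdim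
    _ ≤ ∑ _j ∈ E, (1 - δ) := Finset.sum_le_sum fun j _ =>
        (pow_le_pow_left₀ (norm_nonneg _) (Sᗮ.norm_orthogonalProjectionOnto_apply_le (f j)) 2).trans
          (hδ j)
    _ = E.card * (1 - δ) := by rw [Finset.sum_const, nsmul_eq_mul]
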